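/- arXiv:2404.11510 — 4 statements merged into one kernel-verified Lean document; each statement's English description precedes it below -/
import Mathlib

section
/- Under consistency and the total-expectation identity, the (l,a)-CATE satisfies E(Y^a - Y^{a*} | A=a, L=l) = (E(Y | L=l) - E(Y^{a*} | L=l)) / P(A=a | L=l) when a ≠ a* are the two values of a binary treatment and P(A=a|L=l) > 0. -/
theorem stmt_2_general (EY_Aa EY_Aast EYast_Aast EYast_Aa EYast EY pa past : ℝ)
    (hpos : 0 < pa)
    (hconsist : EY_Aast = EYast_Aast)
    (htotYast : EYast = EYast_Aast * past + EYast_Aa * pa)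
    (htotY : EY = EY_Aa * pa + EY_Aast * past) :
    EY_Aa - EYast_Aa = (EY - EYast) / pa := by
  have hdiff : EY - EYast = (EY_Aa - EYast_Aa) * pa := by
    rw [htotY, htotYast, hconsist]
    ring
  rw [hdiff, mul_div_cancel_right₀ _ hpos.ne']

/-- Identification of the (l,a)-CATE:
`E(Y^a - Y^{a*} | A=a, L=l) = (E(Y|L=l) - E(Y^{a*}|L=l)) / P(A=a|L=l)`. -/
theorem stmt_2 (EY_Aa EY_Aast EYast_Aast EYast_Aa EYast EY pa past : ℝ)
    (hpos : 0 < pa) (hsum : pa + past = 1)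
    (hconsist : EY_Aast = EYast_Aast)
    (htotYast : EYast = EYast_Aast * past + EYast_Aa * pa)
    (htotY : EY = EY_Aa * pa + EY_Aast * past) :
    EY_Aa - EYast_Aa = (EY - EYast) / pa :=
  stmt_2_general EY_Aa EY_Aast EYast_Aast EYast_Aa EYast EY pa past hpos hconsist htotYast htotY
end

section
/- Let Lb, Ub be reals with Lb < 0 < Ub. The minimizer over p ∈ [0,1] of f(p) = max((1-p)·max(Ub,0), p·max(-Lb,0)) is p* = Ub/(Ub - Lb), and the minimal worst-case regret is -Lb·Ub/(Ub - Lb). -/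
/-! The two regrets `(1 - p) a` and `p b` are affine in `p` with opposite slopes, so their maximum
is smallest where they cross, at `p = a / (a + b)`. The lower bound holds because a maximum
dominates every convex combination, and the combination with weights `b / (a + b)`,
`a / (a + b)` does not depend on `p`: it is `a b / (a + b)`. -/

namespace MinimaxRegret

variable {a b : ℝ}

theorem max_regret_at_crossing (hab : 0 < a + b) :
    max ((1 - a / (a + b)) * a) (a / (a + b) * b) = a * b / (a + b) := by
  have hcross : (1 - a / (a + b)) * a = a / (a + b) * b := by
    field_simp
    ring
  rw [hcross, max_self, div_mul_eq_mul_div]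

theorem le_max_regret (ha : 0 ≤ a) (hb : 0 ≤ b) (hab : 0 < a + b) (p : ℝ) :
    a * b / (a + b) ≤ max ((1 - p) * a) (p * b) := by
  rw [div_le_iff₀ hab]
  calc a * b = b * ((1 - p) * a) + a * (p * b) := by ring
    _ ≤ b * max ((1 - p) * a) (p * b) + a * max ((1 - p) * a) (p * b) := by
      gcongr
      exacts [le_max_left _ _, le_max_right _ _]
    _ = max ((1 - p) * a) (p * b) * (a + b) := by ring

end MinimaxRegret

open MinimaxRegret in
/-- The minimax-regret mixed strategy: when `Lb < 0 < Ub`, the minimizer of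
`f(p) = max((1-p)·max(Ub,0), p·max(-Lb,0))` over `[0,1]` is
`p* = Ub/(Ub - Lb)` with minimal worst-case regret `-Lb·Ub/(Ub - Lb)`. -/
theorem stmt_6 (Lb Ub : ℝ) (hL : Lb < 0) (hU : 0 < Ub) :
    (∀ p : ℝ, 0 ≤ p → p ≤ 1 →
      max ((1 - Ub / (Ub - Lb)) * max Ub 0) ((Ub / (Ub - Lb)) * max (-Lb) 0)
        ≤ max ((1 - p) * max Ub 0) (p * max (-Lb) 0)) ∧
    max ((1 - Ub / (Ub - Lb)) * max Ub 0) ((Ub / (Ub - Lb)) * max (-Lb) 0)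
      = -Lb * Ub / (Ub - Lb) := by
  have hLb : 0 ≤ -Lb := neg_nonneg.mpr hL.le
  have hsum : 0 < Ub + -Lb := by linarith
  have hvalue := max_regret_at_crossing hsum
  have hbound := le_max_regret hU.le hLb hsum
  rw [← sub_eq_add_neg, mul_comm Ub (-Lb)] at hvalue hbound
  rw [max_eq_left hU.le, max_eq_left hLb, hvalue]
  exact ⟨fun p _ _ => hbound p, rfl⟩
end

section
/- If Lb < 0 < Ub, then -Lb·Ub/(Ub - Lb) < min(-Lb, Ub); i.e., the mixed strategy's worst-case regret is strictly smaller than the opportunist strategy's worst-case regret. -/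
/-- The mixed strategy's worst-case regret is strictly smaller than the
opportunist strategy's worst-case regret. -/
theorem stmt_7 (Lb Ub : ℝ) (hL : Lb < 0) (hU : 0 < Ub) :
    -Lb * Ub / (Ub - Lb) < min (-Lb) Ub := by
  have hd : 0 < Ub - Lb := by linarith
  rw [div_lt_iff₀ hd]
  rcases min_cases (-Lb) Ub with ⟨h, _⟩ | ⟨h, _⟩ <;> rw [h] <;> nlinarith
end

section
/- Suppose E(Y^a | L=l) = Σ_{a''∈𝒜} E(Y^a | A=a'', L=l)·P(A=a''|L=l), with all E(Y^a | A=a'', L=l) ∈ [0,1], E(Y^a|A=a,L=l) = E(Y|A=a,L=l), P(A=a'|L=l) > 0, and the probabilities summing to 1. Then for a ≠ a': (E(Y^a|L=l) - E(Y|A=a,L=l)·P(A=a|L=l) + P(A=a|L=l) + P(A=a'|L=l) - 1)/P(A=a'|L=l) ≤ E(Y^a | A=a', L=l) ≤ (E(Y^a|L=l) - E(Y|A=a,L=l)·P(A=a|L=l))/P(A=a'|L=l). -/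
/-!
Split the total expectation `∑ E x * P x` into the terms at `a` and `a'` plus a nonnegative rest.
Dropping the rest gives the upper bound. The lower bound is the same argument applied to
`(1 - E x) * P x`, which is also nonnegative and sums to `1 - ∑ E x * P x`.
-/

theorem add_le_tsum_of_nonneg {α M : Type*} [AddCommMonoid M] [PartialOrder M]
    [IsOrderedAddMonoid M] [TopologicalSpace M] [OrderClosedTopology M] {f : α → M} {a a' : α}
    (hne : a ≠ a') (hf : ∀ x, 0 ≤ f x) (hsum : Summable f) :
    f a + f a' ≤ ∑' x, f x := by
  classical
  simpa only [Finset.sum_pair hne] using hsum.sum_le_tsum {a, a'} fun x _ => hf x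

theorem stmt_9_general {α : Type*} (E P : α → ℝ) (a a' : α) (EYa_l c : ℝ)
    (hne : a ≠ a')
    (hEbd : ∀ x, 0 ≤ E x ∧ E x ≤ 1)
    (hPnn : ∀ x, 0 ≤ P x)
    (hPsummable : Summable P) (hPsum : ∑' x, P x = 1)
    (hEsummable : Summable (fun x => E x * P x))
    (htot : EYa_l = ∑' x, E x * P x)
    (hconsist : E a = c)
    (hpos : 0 < P a') :
    (EYa_l - c * P a + P a + P a' - 1) / P a' ≤ E a' ∧
      E a' ≤ (EYa_l - c * P a) / P a' := by
  subst hconsist htot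
  have hupper : E a * P a + E a' * P a' ≤ ∑' x, E x * P x :=
    add_le_tsum_of_nonneg hne (fun x => mul_nonneg (hEbd x).1 (hPnn x)) hEsummable
  have hlower : (1 - E a) * P a + (1 - E a') * P a' ≤ 1 - ∑' x, E x * P x := by
    have hrest : Summable fun x => (1 - E x) * P x := by
      simpa only [sub_mul, one_mul] using hPsummable.sub hEsummable
    have htsum_rest : ∑' x, (1 - E x) * P x = 1 - ∑' x, E x * P x := by
      simp only [sub_mul, one_mul, hPsummable.tsum_sub hEsummable, hPsum]
    rw [← htsum_rest]
    exact add_le_tsum_of_nonneg hne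
      (fun x => mul_nonneg (sub_nonneg.2 (hEbd x).2) (hPnn x)) hrest
  constructor
  · rw [div_le_iff₀ hpos]; linarith
  · rw [le_div_iff₀ hpos]; linarith

/-- Bounds on `E(Y^a | A=a', L=l)` for countable (more than binary) treatment. -/
theorem stmt_9 {α : Type*} [Countable α] (E P : α → ℝ) (a a' : α) (EYa_l c : ℝ)
    (hne : a ≠ a')
    (hEbd : ∀ x, 0 ≤ E x ∧ E x ≤ 1)
    (hPnn : ∀ x, 0 ≤ P x)
    (hPsummable : Summable P) (hPsum : ∑' x, P x = 1)
    (hEsummable : Summable (fun x => E x * P x))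
    (htot : EYa_l = ∑' x, E x * P x)
    (hconsist : E a = c)
    (hpos : 0 < P a') :
    (EYa_l - c * P a + P a + P a' - 1) / P a' ≤ E a' ∧
      E a' ≤ (EYa_l - c * P a) / P a' :=
  stmt_9_general E P a a' EYa_l c hne hEbd hPnn hPsummable hPsum hEsummable htot hconsist hpos
end
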